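/- Let 0 < γ < 1. There exists a constant C depending only on γ such that for every τ > 0, every integer n ≥ 0, and every twice continuously differentiable function u : [0, t_{n+1}] → ℝ with |u''(s)| ≤ H for all s (where t_k = kτ), the L1 approximation of the Caputo derivative satisfies | (1/Γ(1-γ)) ∫_0^{t_{n+1}} u'(s) (t_{n+1} - s)^{-γ} ds − (1/(τ^γ Γ(2-γ))) ∑_{l=0}^{n} w_l (u(t_{n-l+1}) − u(t_{n-l})) | ≤ C H τ^{2-γ}. -/

import Mathlib

/-!
Write `g = u'` and `p s = (t_{n+1} - s)^{-γ}`. Since `∫_{t_k}^{t_{k+1}} p = τ^{1-γ} w_{n-k} / (1-γ)`,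
the L1 sum equals `(1/Γ(1-γ)) ∑_k (⨍_{t_k}^{t_{k+1}} g) ∫_{t_k}^{t_{k+1}} p`, so the error is
`(1/Γ(1-γ)) ∑_k ∫_{t_k}^{t_{k+1}} (g - ⨍ g) p`, and `|g - ⨍ g| ≤ Hτ` on each cell because `g` is
`H`-Lipschitz. On a cell with `k < n` the kernel is continuous and increasing and `g - ⨍ g` has mean
zero, so `p` may be replaced by `p - p t_k`; these errors telescope to `Hτ² p t_n = Hτ^{2-γ}`.
The last cell, where `p` is singular but integrable, contributes `Hτ · τ^{1-γ}/(1-γ)`.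
-/

open Set

/-- L1 discretization weights `w_l = (l+1)^{1-γ} - l^{1-γ}`. -/
noncomputable def w (γ : ℝ) (l : ℕ) : ℝ := ((l : ℝ) + 1) ^ (1 - γ) - (l : ℝ) ^ (1 - γ)

open MeasureTheory
open scoped NNReal

section DerivWithinIcc

variable {u : ℝ → ℝ} {a b : ℝ}

theorem hasDerivAt_derivWithin_Icc (hu : DifferentiableOn ℝ u (Icc a b)) {x : ℝ}
    (hx : x ∈ Ioo a b) : HasDerivAt u (derivWithin u (Icc a b) x) x := by
  rw [derivWithin_of_mem_nhds (Icc_mem_nhds hx.1 hx.2)]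
  exact ((hu x (Ioo_subset_Icc_self hx)).differentiableAt (Icc_mem_nhds hx.1 hx.2)).hasDerivAt

theorem integral_derivWithin_Icc_eq_sub (hab : a < b) (hu : ContDiffOn ℝ 1 u (Icc a b))
    {x y : ℝ} (hx : a ≤ x) (hxy : x ≤ y) (hy : y ≤ b) :
    ∫ s in x..y, derivWithin u (Icc a b) s = u y - u x := by
  have hsub : Icc x y ⊆ Icc a b := Icc_subset_Icc hx hy
  refine intervalIntegral.integral_eq_sub_of_hasDerivAt_of_le hxy (hu.continuousOn.mono hsub)
    (fun s hs => hasDerivAt_derivWithin_Icc (hu.differentiableOn one_ne_zero)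
      (Ioo_subset_Ioo hx hy hs)) ?_
  exact ((hu.continuousOn_derivWithin (uniqueDiffOn_Icc hab) le_rfl).mono
    (by rwa [uIcc_of_le hxy])).intervalIntegrable

theorem integral_deriv_mul_eq_derivWithin_Icc (hab : a ≤ b) (f : ℝ → ℝ) :
    ∫ s in a..b, deriv u s * f s = ∫ s in a..b, derivWithin u (Icc a b) s * f s := by
  simp only [intervalIntegral.integral_of_le hab, integral_Ioc_eq_integral_Ioo]
  refine setIntegral_congr_fun measurableSet_Ioo fun s hs => ?_
  rw [derivWithin_of_mem_nhds (Icc_mem_nhds hs.1 hs.2)]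

theorem lipschitzOnWith_derivWithin_Icc {K : ℝ≥0} (hab : a < b) (hu : ContDiffOn ℝ 2 u (Icc a b))
    (hK : ∀ s ∈ Ioo a b, |deriv (deriv u) s| ≤ K) :
    LipschitzOnWith K (derivWithin u (Icc a b)) (Icc a b) := by
  set g := derivWithin u (Icc a b)
  have hg : ContDiffOn ℝ 1 g (Icc a b) := hu.derivWithin (uniqueDiffOn_Icc hab) (by norm_num)
  refine (convex_Icc a b).lipschitzOnWith_of_nnnorm_derivWithin_le
    (hg.differentiableOn one_ne_zero) fun x hx => ?_
  rw [← NNReal.coe_le_coe, coe_nnnorm, Real.norm_eq_abs]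
  -- the bound on the open interval passes to its closure by continuity
  rw [← closure_Ioo hab.ne] at hx
  refine le_on_closure (f := fun y => |derivWithin g (Icc a b) y|) (fun s hs => ?_) ?_
    continuousOn_const hx
  · have hgs : g =ᶠ[nhds s] deriv u := by
      filter_upwards [isOpen_Ioo.mem_nhds hs] with y hy
      exact derivWithin_of_mem_nhds (Icc_mem_nhds hy.1 hy.2)
    rw [derivWithin_of_mem_nhds (Icc_mem_nhds hs.1 hs.2), hgs.deriv_eq]
    exact hK s hs
  · rw [closure_Ioo hab.ne]
    exact (hg.continuousOn_derivWithin (uniqueDiffOn_Icc hab) le_rfl).abs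

end DerivWithinIcc

theorem integral_eq_sum_integral_uniform_grid {f : ℝ → ℝ} {τ : ℝ} (n : ℕ)
    (hf : ∀ k < n, IntervalIntegrable f volume (k * τ) ((k + 1) * τ)) :
    ∫ s in (0 : ℝ)..n * τ, f s =
      ∑ k ∈ Finset.range n, ∫ s in (k : ℝ) * τ..((k : ℝ) + 1) * τ, f s := by
  have := intervalIntegral.sum_integral_adjacent_intervals (a := fun k : ℕ => (k : ℝ) * τ)
    (fun k hk => by simpa using hf k hk)
  push_cast at this
  rw [zero_mul] at this
  exact this.symm

section AveragingError

variable {g p : ℝ → ℝ} {a b : ℝ} {K : ℝ≥0}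

noncomputable def averagingError (g p : ℝ → ℝ) (a b : ℝ) : ℝ :=
  (∫ x in a..b, g x * p x) - (⨍ x in a..b, g x) * ∫ x in a..b, p x

theorem abs_sub_interval_average_le (hab : a < b) (hg : LipschitzOnWith K g (Icc a b))
    {s : ℝ} (hs : s ∈ Icc a b) : |g s - ⨍ x in a..b, g x| ≤ K * (b - a) := by
  have hba : 0 < b - a := sub_pos.2 hab
  have hint : IntervalIntegrable g volume a b :=
    (hg.continuousOn.mono (uIcc_of_le hab.le).subset).intervalIntegrable
  have hdev : ‖∫ x in a..b, (g s - g x)‖ ≤ K * (b - a) * |b - a| := by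
    refine intervalIntegral.norm_integral_le_of_norm_le_const fun x hx => ?_
    rw [uIoc_of_le hab.le] at hx
    have hx' : x ∈ Icc a b := Ioc_subset_Icc_self hx
    calc ‖g s - g x‖ ≤ K * ‖s - x‖ := by simpa using hg.norm_sub_le hs hx'
      _ ≤ K * (b - a) := by
          gcongr
          rw [Real.norm_eq_abs, abs_le]
          constructor <;> linarith [hs.1, hs.2, hx'.1, hx'.2]
  rw [intervalIntegral.integral_sub intervalIntegrable_const hint,
    intervalIntegral.integral_const, smul_eq_mul, abs_of_pos hba, Real.norm_eq_abs] at hdev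
  rw [interval_average_eq_div, sub_div' hba.ne', abs_div, abs_of_pos hba, div_le_iff₀ hba,
    mul_comm (g s)]
  linarith

theorem averagingError_eq_integral (hab : a < b) (hg : ContinuousOn g (Icc a b))
    (hp : IntervalIntegrable p volume a b) :
    averagingError g p a b = ∫ x in a..b, (g x - ⨍ y in a..b, g y) * p x := by
  have hg' : ContinuousOn g (uIcc a b) := by rwa [uIcc_of_le hab.le]
  simp only [averagingError, sub_mul]
  rw [intervalIntegral.integral_sub (hp.continuousOn_mul hg') (hp.const_mul _),
    intervalIntegral.integral_const_mul]

theorem abs_averagingError_le_of_monotoneOn (hab : a < b) (hg : LipschitzOnWith K g (Icc a b))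
    (hp : ContinuousOn p (Icc a b)) (hpm : MonotoneOn p (Icc a b)) :
    |averagingError g p a b| ≤ K * (b - a) ^ 2 * (p b - p a) := by
  have hp' : ContinuousOn p (uIcc a b) := by rwa [uIcc_of_le hab.le]
  have hg' : ContinuousOn g (uIcc a b) := by rw [uIcc_of_le hab.le]; exact hg.continuousOn
  rw [averagingError_eq_integral hab hg.continuousOn hp'.intervalIntegrable]
  set c := ⨍ x in a..b, g x with hc
  have hgc : ContinuousOn (fun x => g x - c) (uIcc a b) := hg'.sub continuousOn_const
  -- `g - c` has mean zero, so `p` may be replaced by `p - p a`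
  have hmean : ∫ x in a..b, (g x - c) = 0 := by
    rw [intervalIntegral.integral_sub hg'.intervalIntegrable intervalIntegrable_const,
      intervalIntegral.integral_const, smul_eq_mul, hc, interval_average_eq_div]
    field_simp [(sub_pos.2 hab).ne']
    ring
  have hshift : ∫ x in a..b, (g x - c) * p x = ∫ x in a..b, (g x - c) * (p x - p a) := by
    have hgcp : ContinuousOn (fun x => (g x - c) * p x) (uIcc a b) := hgc.mul hp'
    simp only [mul_sub]
    rw [intervalIntegral.integral_sub hgcp.intervalIntegrable
      (hgc.intervalIntegrable.mul_const _), intervalIntegral.integral_mul_const, hmean,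
      zero_mul, sub_zero]
  rw [hshift, ← Real.norm_eq_abs]
  calc ‖∫ x in a..b, (g x - c) * (p x - p a)‖ ≤ K * (b - a) * (p b - p a) * |b - a| := by
        refine intervalIntegral.norm_integral_le_of_norm_le_const fun x hx => ?_
        rw [uIoc_of_le hab.le] at hx
        have hx' : x ∈ Icc a b := Ioc_subset_Icc_self hx
        have hpa : p a ≤ p x := hpm (left_mem_Icc.2 hab.le) hx' hx'.1
        have hpb : p x ≤ p b := hpm hx' (right_mem_Icc.2 hab.le) hx'.2
        rw [norm_mul, Real.norm_eq_abs, Real.norm_eq_abs, abs_of_nonneg (sub_nonneg.2 hpa)]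
        exact mul_le_mul (abs_sub_interval_average_le hab hg hx') (by linarith)
          (sub_nonneg.2 hpa) (by positivity)
    _ = K * (b - a) ^ 2 * (p b - p a) := by rw [abs_of_pos (sub_pos.2 hab)]; ring

theorem abs_averagingError_le_of_nonneg (hab : a < b) (hg : LipschitzOnWith K g (Icc a b))
    (hp : IntervalIntegrable p volume a b) (hp0 : ∀ x ∈ Ioc a b, 0 ≤ p x) :
    |averagingError g p a b| ≤ K * (b - a) * ∫ x in a..b, p x := by
  rw [averagingError_eq_integral hab hg.continuousOn hp, ← Real.norm_eq_abs,
    ← intervalIntegral.integral_const_mul]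
  refine intervalIntegral.norm_integral_le_of_norm_le hab.le ?_ (hp.const_mul _)
  refine Filter.Eventually.of_forall fun x hx => ?_
  rw [norm_mul, Real.norm_eq_abs, Real.norm_eq_abs, abs_of_nonneg (hp0 x hx)]
  exact mul_le_mul_of_nonneg_right
    (abs_sub_interval_average_le hab hg (Ioc_subset_Icc_self hx)) (hp0 x hx)

end AveragingError

section Kernel

variable {γ : ℝ}

theorem intervalIntegrable_sub_rpow_neg (hγ : γ < 1) (T a b : ℝ) :
    IntervalIntegrable (fun s => (T - s) ^ (-γ)) volume a b := by
  simpa using (intervalIntegral.intervalIntegrable_rpow' (r := -γ) (by linarith)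
    (a := T - a) (b := T - b)).comp_sub_left T

theorem integral_sub_rpow_neg (hγ : γ < 1) (T a b : ℝ) :
    ∫ s in a..b, (T - s) ^ (-γ) = ((T - a) ^ (1 - γ) - (T - b) ^ (1 - γ)) / (1 - γ) := by
  rw [intervalIntegral.integral_comp_sub_left (fun x => x ^ (-γ)) T,
    integral_rpow (Or.inl (by linarith)), show -γ + 1 = 1 - γ by ring]

theorem integral_sub_rpow_neg_eq_w (hγ : γ < 1) {τ : ℝ} (hτ : 0 ≤ τ) {n k : ℕ} (hk : k ≤ n) :
    ∫ s in (k : ℝ) * τ..((k : ℝ) + 1) * τ, (((n : ℝ) + 1) * τ - s) ^ (-γ) =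
      τ ^ (1 - γ) * w γ (n - k) / (1 - γ) := by
  have hkn : (0 : ℝ) ≤ n - k := sub_nonneg.2 (Nat.cast_le.2 hk)
  rw [integral_sub_rpow_neg hγ, w, Nat.cast_sub hk,
    show ((n : ℝ) + 1) * τ - k * τ = ((n : ℝ) - k + 1) * τ by ring,
    show ((n : ℝ) + 1) * τ - (k + 1) * τ = ((n : ℝ) - k) * τ by ring,
    Real.mul_rpow (by linarith) hτ, Real.mul_rpow hkn hτ]
  ring

theorem L1_sum_eq_sum_slope_mul_integral (hγ : γ < 1) {τ : ℝ} (hτ : 0 < τ) (n : ℕ)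
    (u : ℝ → ℝ) :
    1 / (τ ^ γ * Real.Gamma (2 - γ)) *
        ∑ l ∈ Finset.range (n + 1), w γ l * (u (((n : ℝ) - l + 1) * τ) - u (((n : ℝ) - l) * τ)) =
      1 / Real.Gamma (1 - γ) * ∑ k ∈ Finset.range (n + 1),
        (u (((k : ℝ) + 1) * τ) - u (k * τ)) / τ *
          ∫ s in (k : ℝ) * τ..((k : ℝ) + 1) * τ, (((n : ℝ) + 1) * τ - s) ^ (-γ) := by
  have hΓ : Real.Gamma (2 - γ) = (1 - γ) * Real.Gamma (1 - γ) := by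
    rw [← Real.Gamma_add_one (by linarith)]; ring_nf
  have hτγ : τ ^ (1 - γ) = τ / τ ^ γ := by rw [Real.rpow_sub hτ, Real.rpow_one]
  rw [← Finset.sum_range_reflect, Finset.mul_sum, Finset.mul_sum]
  refine Finset.sum_congr rfl fun k hk => ?_
  have hkn : k ≤ n := Nat.lt_succ_iff.1 (Finset.mem_range.1 hk)
  have hidx : ((n + 1 - 1 - k : ℕ) : ℝ) = n - k := by
    rw [Nat.add_sub_cancel, Nat.cast_sub hkn]
  rw [integral_sub_rpow_neg_eq_w hγ hτ.le hkn, hidx, Nat.add_sub_cancel, hΓ, hτγ,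
    sub_sub_cancel]
  have : (0 : ℝ) < τ ^ γ := Real.rpow_pos_of_pos hτ γ
  have : Real.Gamma (1 - γ) ≠ 0 := (Real.Gamma_pos_of_pos (by linarith)).ne'
  field_simp

variable {g : ℝ → ℝ} {K : ℝ≥0} {a b T : ℝ}

theorem abs_averagingError_sub_rpow_neg_le (hγ : 0 ≤ γ) (hab : a < b) (hbT : b < T)
    (hg : LipschitzOnWith K g (Icc a b)) :
    |averagingError g (fun s => (T - s) ^ (-γ)) a b| ≤
      K * (b - a) ^ 2 * ((T - b) ^ (-γ) - (T - a) ^ (-γ)) := by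
  have hlt : ∀ s ∈ Icc a b, 0 < T - s := fun s hs => sub_pos.2 (hs.2.trans_lt hbT)
  refine abs_averagingError_le_of_monotoneOn hab hg
    ((continuousOn_const.sub continuousOn_id).rpow_const fun s hs => Or.inl (hlt s hs).ne')
    fun _ _ y hy hxy => ?_
  exact Real.rpow_le_rpow_of_nonpos (hlt y hy) (by linarith) (by linarith)

theorem abs_averagingError_right_sub_rpow_neg_le (hγ : γ < 1) (hab : a < b)
    (hg : LipschitzOnWith K g (Icc a b)) :
    |averagingError g (fun s => (b - s) ^ (-γ)) a b| ≤ K * (b - a) ^ (2 - γ) / (1 - γ) := by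
  have hba : 0 < b - a := sub_pos.2 hab
  refine (abs_averagingError_le_of_nonneg hab hg (intervalIntegrable_sub_rpow_neg hγ b a b)
    fun s hs => Real.rpow_nonneg (sub_nonneg.2 hs.2) _).trans_eq ?_
  rw [integral_sub_rpow_neg hγ, sub_self, Real.zero_rpow (by linarith), sub_zero,
    show (2 : ℝ) - γ = 1 + (1 - γ) by ring, Real.rpow_add hba, Real.rpow_one]
  ring

theorem sum_abs_averagingError_sub_rpow_neg_le (hγ : 0 ≤ γ) {τ : ℝ} (hτ : 0 < τ) (n : ℕ)
    (hg : ∀ k < n, LipschitzOnWith K g (Icc ((k : ℝ) * τ) (((k : ℝ) + 1) * τ))) :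
    ∑ k ∈ Finset.range n,
      |averagingError g (fun s => (((n : ℝ) + 1) * τ - s) ^ (-γ)) (k * τ) ((k + 1) * τ)| ≤
        K * τ ^ (2 - γ) := by
  set T := ((n : ℝ) + 1) * τ with hT
  calc _ ≤ ∑ k ∈ Finset.range n,
        K * τ ^ 2 * ((T - ((k : ℝ) + 1) * τ) ^ (-γ) - (T - k * τ) ^ (-γ)) := by
        refine Finset.sum_le_sum fun k hk => ?_
        have hk := Finset.mem_range.1 hk
        have := abs_averagingError_sub_rpow_neg_le (T := T) hγ (by nlinarith)
          (by rw [hT]; gcongr) (hg k hk)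
        rwa [show ((k : ℝ) + 1) * τ - k * τ = τ by ring] at this
    _ = K * τ ^ 2 * (τ ^ (-γ) - T ^ (-γ)) := by
        have htel := Finset.sum_range_sub (fun k : ℕ => (T - k * τ) ^ (-γ)) n
        simp only [Nat.cast_add, Nat.cast_one, Nat.cast_zero, zero_mul, sub_zero] at htel
        rw [← Finset.mul_sum, htel, show T - n * τ = τ by rw [hT]; ring]
    _ ≤ K * τ ^ 2 * τ ^ (-γ) := by
        gcongr
        exact sub_le_self _ (Real.rpow_nonneg (by positivity) _)
    _ = K * τ ^ (2 - γ) := by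
        rw [mul_assoc, ← Real.rpow_natCast, ← Real.rpow_add hτ]; norm_num [sub_eq_add_neg]

theorem abs_integral_kernel_sub_sum_interval_average_le (hγ0 : 0 ≤ γ) (hγ1 : γ < 1)
    {τ : ℝ} (hτ : 0 < τ) (n : ℕ) (hg : LipschitzOnWith K g (Icc 0 (((n : ℝ) + 1) * τ))) :
    |(∫ s in (0 : ℝ)..((n : ℝ) + 1) * τ, g s * (((n : ℝ) + 1) * τ - s) ^ (-γ)) -
        ∑ k ∈ Finset.range (n + 1), (⨍ s in (k : ℝ) * τ..((k : ℝ) + 1) * τ, g s) *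
          ∫ s in (k : ℝ) * τ..((k : ℝ) + 1) * τ, (((n : ℝ) + 1) * τ - s) ^ (-γ)| ≤
      (1 + 1 / (1 - γ)) * K * τ ^ (2 - γ) := by
  have hstep : ∀ k : ℕ, (k : ℝ) * τ < ((k : ℝ) + 1) * τ := fun k => by nlinarith
  have hcell : ∀ k ≤ n, LipschitzOnWith K g (Icc ((k : ℝ) * τ) (((k : ℝ) + 1) * τ)) :=
    fun k hk => hg.mono (Icc_subset_Icc (by positivity) (by gcongr))
  have hlast := abs_averagingError_right_sub_rpow_neg_le hγ1 (hstep n) (hcell n le_rfl)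
  rw [show ((n : ℝ) + 1) * τ - n * τ = τ by ring] at hlast
  rw [← Nat.cast_add_one, integral_eq_sum_integral_uniform_grid, ← Finset.sum_sub_distrib,
    Nat.cast_add_one]
  · change |∑ k ∈ Finset.range (n + 1), averagingError g _ _ _| ≤ _
    calc _ ≤ K * τ ^ (2 - γ) + K * τ ^ (2 - γ) / (1 - γ) := by
          rw [Finset.sum_range_succ]
          exact (abs_add_le _ _).trans (add_le_add ((Finset.abs_sum_le_sum_abs _ _).trans
            (sum_abs_averagingError_sub_rpow_neg_le hγ0 hτ n fun k hk => hcell k hk.le)) hlast)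
      _ = (1 + 1 / (1 - γ)) * K * τ ^ (2 - γ) := by ring
  · exact fun k hk => (intervalIntegrable_sub_rpow_neg hγ1 _ _ _).continuousOn_mul
      ((hcell k (by omega)).continuousOn.mono (uIcc_of_le (hstep k).le).subset)

end Kernel

/-- Truncation error of the L1 approximation of the Caputo fractional derivative:
there is a constant `C = C(γ)` such that for every step `τ > 0`, every `n` and every
twice continuously differentiable `u` on `[0, t_{n+1}]` with `|u''| ≤ H` there,
`|(1/Γ(1-γ)) ∫_0^{t_{n+1}} u'(s)(t_{n+1}-s)^{-γ} ds
  − (1/(τ^γ Γ(2-γ))) ∑_{l=0}^{n} w_l (u(t_{n-l+1}) − u(t_{n-l}))| ≤ C H τ^{2-γ}`. -/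
theorem caputo_L1_truncation_error (γ : ℝ) (hγ0 : 0 < γ) (hγ1 : γ < 1) :
    ∃ C : ℝ, 0 < C ∧ ∀ (τ : ℝ), 0 < τ → ∀ (n : ℕ) (u : ℝ → ℝ) (H : ℝ),
      ContDiffOn ℝ 2 u (Set.Icc 0 (((n : ℝ) + 1) * τ)) →
      (∀ s ∈ Set.Icc (0 : ℝ) (((n : ℝ) + 1) * τ), |deriv (deriv u) s| ≤ H) →
      |(1 / Real.Gamma (1 - γ)) *
          (∫ s in (0 : ℝ)..(((n : ℝ) + 1) * τ),
            deriv u s * ((((n : ℝ) + 1) * τ - s) ^ (-γ))) -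
        (1 / (τ ^ γ * Real.Gamma (2 - γ))) *
          ∑ l ∈ Finset.range (n + 1),
            w γ l * (u (((n : ℝ) - (l : ℝ) + 1) * τ) - u (((n : ℝ) - (l : ℝ)) * τ))|
        ≤ C * H * τ ^ (2 - γ) := by
  have hΓ : 0 < Real.Gamma (1 - γ) := Real.Gamma_pos_of_pos (by linarith)
  refine ⟨(1 + 1 / (1 - γ)) / Real.Gamma (1 - γ), by positivity, ?_⟩
  intro τ hτ n u H hu hH
  set T := ((n : ℝ) + 1) * τ with hT
  have hT0 : 0 < T := by positivity
  lift H to ℝ≥0 using (abs_nonneg _).trans (hH 0 ⟨le_rfl, hT0.le⟩)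
  have hg := lipschitzOnWith_derivWithin_Icc hT0 hu fun s hs => hH s (Ioo_subset_Icc_self hs)
  have hslope : ∀ k ∈ Finset.range (n + 1), (u (((k : ℝ) + 1) * τ) - u (k * τ)) / τ =
      ⨍ s in (k : ℝ) * τ..((k : ℝ) + 1) * τ, derivWithin u (Icc 0 T) s := fun k hk => by
    rw [interval_average_eq_div, integral_derivWithin_Icc_eq_sub hT0 (hu.of_le one_le_two)
      (by positivity) (by nlinarith) (by rw [hT]; gcongr; exact Finset.mem_range_succ_iff.1 hk),
      show ((k : ℝ) + 1) * τ - k * τ = τ by ring]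
  rw [integral_deriv_mul_eq_derivWithin_Icc hT0.le, L1_sum_eq_sum_slope_mul_integral hγ1 hτ,
    Finset.sum_congr rfl fun k hk => by rw [hslope k hk], ← mul_sub, abs_mul,
    abs_of_pos (one_div_pos.2 hΓ)]
  calc _ ≤ 1 / Real.Gamma (1 - γ) * ((1 + 1 / (1 - γ)) * H * τ ^ (2 - γ)) := by
        gcongr
        exact abs_integral_kernel_sub_sum_interval_average_le hγ0.le hγ1 hτ n hg
    _ = _ := by ring
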